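/- arXiv:1410.6801 — 5 statements merged into one kernel-verified Lean document; each statement's English description precedes it below -/
import Mathlib

section
/- Let A ∈ ℝ^{n×d} have rank r, let k ≤ r and let m = ⌈k/ε⌉ for 0 < ε < 1. Then Σ_{i=m+1}^{m+k} σ_i²(A) ≤ ε · Σ_{i=k+1}^{r} σ_i²(A), where σ_i(A) denotes the i-th largest singular value of A (with σ_i = 0 for i > r). -/
open Matrix

/-- Let `A ∈ ℝ^{n×d}` have rank `r` and singular values `σ_1 ≥ σ_2 ≥ ... ≥ 0`
(here given 0-indexed, so `σ i` is the `(i+1)`-st singular value, with `σ i = 0`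
for `i ≥ r`), exhibited by a singular value decomposition `A = U Σ Vᵀ` with
orthogonal `U, V`. For `k ≤ r`, `0 < ε < 1`, and `m = ⌈k/ε⌉`,
`Σ_{i=m+1}^{m+k} σ_i²(A) ≤ ε · Σ_{i=k+1}^{r} σ_i²(A)`. -/
theorem sum_sq_singular_tail_le {n d : ℕ} (A : Matrix (Fin n) (Fin d) ℝ)
    (U : Matrix (Fin n) (Fin n) ℝ) (V : Matrix (Fin d) (Fin d) ℝ) (σ : ℕ → ℝ)
    (r k : ℕ) (ε : ℝ) (hε0 : 0 < ε) (hε1 : ε < 1) (hkr : k ≤ r)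
    (hU : Uᵀ * U = 1) (hV : Vᵀ * V = 1)
    (hA : A = U * Matrix.of (fun (i : Fin n) (j : Fin d) =>
      if (i : ℕ) = (j : ℕ) then σ (i : ℕ) else 0) * V)
    (hmono : Antitone σ) (hnonneg : ∀ i, 0 ≤ σ i)
    (hrank : A.rank = r) (hzero : ∀ i, r ≤ i → σ i = 0) :
    ∑ i ∈ Finset.Ico (⌈(k : ℝ) / ε⌉₊) (⌈(k : ℝ) / ε⌉₊ + k), σ i ^ 2 ≤
      ε * ∑ i ∈ Finset.Ico k r, σ i ^ 2 := by
  set m : ℕ := ⌈(k : ℝ) / ε⌉₊ with hm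
  -- k ≤ ε * m
  have hkem : (k : ℝ) ≤ ε * m := by
    have h1 : (k : ℝ) / ε ≤ m := Nat.le_ceil _
    calc (k : ℝ) = ε * ((k : ℝ) / ε) := by field_simp
    _ ≤ ε * m := by nlinarith
  -- k ≤ m (as naturals)
  have hkm : k ≤ m := by
    have : (k : ℝ) ≤ m := by nlinarith [Nat.cast_nonneg (α := ℝ) m]
    exact_mod_cast this
  set L : ℝ := ∑ i ∈ Finset.Ico m (m + k), σ i ^ 2 with hL
  set S : ℝ := ∑ i ∈ Finset.Ico k m, σ i ^ 2 with hS
  set T : ℝ := ∑ i ∈ Finset.Ico k r, σ i ^ 2 with hT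
  have hsm : 0 ≤ σ m ^ 2 := sq_nonneg _
  -- L ≤ k * σ m ^ 2
  have hLk : L ≤ (k : ℝ) * σ m ^ 2 := by
    have := Finset.sum_le_card_nsmul (Finset.Ico m (m + k)) (fun i => σ i ^ 2)
      (σ m ^ 2) (by
        intro i hi
        rw [Finset.mem_Ico] at hi
        exact pow_le_pow_left₀ (hnonneg i) (hmono hi.1) 2)
    simpa [Nat.card_Ico, nsmul_eq_mul] using this
  -- (m - k) * σ m ^ 2 ≤ S
  have hSk : ((m - k : ℕ) : ℝ) * σ m ^ 2 ≤ S := by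
    have := Finset.card_nsmul_le_sum (Finset.Ico k m) (fun i => σ i ^ 2)
      (σ m ^ 2) (by
        intro i hi
        rw [Finset.mem_Ico] at hi
        exact pow_le_pow_left₀ (hnonneg m) (hmono hi.2.le) 2)
    simpa [Nat.card_Ico, nsmul_eq_mul] using this
  have hcast : ((m - k : ℕ) : ℝ) = (m : ℝ) - k := by
    rw [Nat.cast_sub hkm]
  -- S + L ≤ T
  have hSLT : S + L ≤ T := by
    have h1 : S + L = ∑ i ∈ Finset.Ico k (m + k), σ i ^ 2 :=
      Finset.sum_Ico_consecutive _ hkm (Nat.le_add_right m k)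
    set N := max r (m + k) with hN
    have h2 : ∑ i ∈ Finset.Ico k (m + k), σ i ^ 2 ≤ ∑ i ∈ Finset.Ico k N, σ i ^ 2 := by
      apply Finset.sum_le_sum_of_subset_of_nonneg
      · exact Finset.Ico_subset_Ico le_rfl (le_max_right _ _)
      · intro i _ _; exact sq_nonneg _
    have h3 : ∑ i ∈ Finset.Ico k N, σ i ^ 2 = T + ∑ i ∈ Finset.Ico r N, σ i ^ 2 :=
      (Finset.sum_Ico_consecutive _ hkr (le_max_left _ _)).symm
    have h4 : ∑ i ∈ Finset.Ico r N, σ i ^ 2 = 0 := by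
      apply Finset.sum_eq_zero
      intro i hi
      rw [Finset.mem_Ico] at hi
      rw [hzero i hi.1]; ring
    rw [h1]
    calc ∑ i ∈ Finset.Ico k (m + k), σ i ^ 2 ≤ T + ∑ i ∈ Finset.Ico r N, σ i ^ 2 :=
      h2.trans h3.le
    _ = T := by rw [h4, add_zero]
  -- (1 - ε) * L ≤ ε * S
  have hkey : (1 - ε) * L ≤ ε * S := by
    have h1 : (1 - ε) * L ≤ (1 - ε) * ((k : ℝ) * σ m ^ 2) := by nlinarith
    have h2 : (1 - ε) * ((k : ℝ) * σ m ^ 2) ≤ ε * (((m : ℝ) - k) * σ m ^ 2) := by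
      nlinarith
    have h3 : ε * (((m : ℝ) - k) * σ m ^ 2) ≤ ε * S := by
      rw [← hcast]; nlinarith
    linarith
  -- conclude
  nlinarith
end

section
/- Let A ∈ ℝ^{n×d}, let A_m be its best rank-m approximation for m = ⌈k/ε⌉ with 0 < ε < 1, and set C = AAᵀ, C̃ = A_m A_mᵀ. Then E := C̃ − C is symmetric, negative semidefinite, and the sum of the k largest absolute eigenvalues of E is at most ε · ‖A − A_k‖_F². -/
open Matrix Finset

/-- Squared Frobenius norm of a real matrix: `‖M‖_F² = tr(M Mᵀ)`. -/
noncomputable def frobSq {n d : ℕ} (M : Matrix (Fin n) (Fin d) ℝ) : ℝ :=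
  Matrix.trace (M * Mᵀ)

/-- Sum of the `k` largest absolute eigenvalues of a symmetric real matrix. -/
noncomputable def sumTopAbsEigen {n : ℕ} {E : Matrix (Fin n) (Fin n) ℝ}
    (hE : E.IsHermitian) (k : ℕ) : ℝ :=
  sSup {x : ℝ | ∃ s : Finset (Fin n), s.card = k ∧ x = ∑ i ∈ s, |hE.eigenvalues i|}

def sMat (n d : ℕ) (σ : ℕ → ℝ) (p : ℕ → Bool) : Matrix (Fin n) (Fin d) ℝ :=
  Matrix.of fun i j => if (i:ℕ) = (j:ℕ) ∧ p (i:ℕ) then σ (i:ℕ) else 0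

lemma diag_prod {n d : ℕ} (σ : ℕ → ℝ) (p q : ℕ → Bool) :
    sMat n d σ p * (sMat n d σ q)ᵀ
    = Matrix.diagonal (fun i : Fin n =>
        if (i:ℕ) < d ∧ p (i:ℕ) ∧ q (i:ℕ) then σ (i:ℕ) ^ 2 else 0) := by
  ext i i'
  simp only [sMat, Matrix.mul_apply, Matrix.transpose_apply, Matrix.of_apply,
    Matrix.diagonal_apply]
  by_cases hi : (i:ℕ) < d
  · rw [Finset.sum_eq_single (⟨(i:ℕ), hi⟩ : Fin d)]
    · by_cases hii : i = i'
      · subst hii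
        simp only [if_pos rfl]
        split_ifs with h1 h2 h3 h4 h5 h6 h7 <;> simp_all <;> ring
      · rw [if_neg hii]
        have : ((i':ℕ) = (i:ℕ)) = False := by
          simp only [eq_iff_iff, iff_false]
          exact fun h => hii (Fin.ext h.symm)
        simp [this]
    · intro b _ hb
      rw [if_neg, zero_mul]
      rintro ⟨h1, -⟩
      exact hb (Fin.ext h1.symm)
    · intro h; exact absurd (Finset.mem_univ _) h
  · rw [Finset.sum_eq_zero, eq_comm]
    · split_ifs with h1 h2
      · exact absurd h2.1 hi
      · rfl
      · rfl
    · intro j _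
      rw [if_neg, zero_mul]
      rintro ⟨h1, -⟩
      exact hi (h1 ▸ j.isLt)

lemma prodUV {n d : ℕ} (U : Matrix (Fin n) (Fin n) ℝ) (V : Matrix (Fin d) (Fin d) ℝ)
    (σ : ℕ → ℝ) (hVV : V * Vᵀ = 1) (p q : ℕ → Bool) :
    (U * sMat n d σ p * V) * (U * sMat n d σ q * V)ᵀ
      = U * Matrix.diagonal (fun i : Fin n =>
          if (i:ℕ) < d ∧ p (i:ℕ) ∧ q (i:ℕ) then σ (i:ℕ) ^ 2 else 0) * Uᵀ := by
  rw [Matrix.transpose_mul, Matrix.transpose_mul]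
  simp only [Matrix.mul_assoc]
  rw [← Matrix.mul_assoc V Vᵀ, hVV, Matrix.one_mul,
    ← Matrix.mul_assoc (sMat n d σ p), diag_prod]



lemma scalar_bound {n : ℕ} (d k m : ℕ) (ε : ℝ) (hε0 : 0 < ε) (hε1 : ε < 1)
    (σ : ℕ → ℝ) (hmono : Antitone σ) (hnonneg : ∀ i, 0 ≤ σ i)
    (hkm : (k:ℝ) ≤ ε * m) (hkm' : k ≤ m)
    (w : Fin n → ℝ) (hw0 : ∀ j, 0 ≤ w j) (hw1 : ∀ j, w j ≤ 1)
    (hws : ∑ j, w j = (k:ℝ)) :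
    ∑ j : Fin n, (if (j:ℕ) < d ∧ m ≤ (j:ℕ) then σ (j:ℕ) ^ 2 else 0) * w j
      ≤ ε * ∑ j : Fin n, (if (j:ℕ) < d ∧ k ≤ (j:ℕ) then σ (j:ℕ) ^ 2 else 0) := by
  set T : ℝ := ∑ j : Fin n, (if (j:ℕ) < d ∧ k ≤ (j:ℕ) then σ (j:ℕ) ^ 2 else 0) with hTdef
  have hT0 : 0 ≤ T := Finset.sum_nonneg fun j _ => by positivity
  set t : ℝ := if m + k ≤ min n d then σ (m + k - 1) ^ 2 else 0 with htdef
  have ht0 : 0 ≤ t := by rw [htdef]; positivity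
  set R2 : Finset (Fin n) := Finset.univ.filter
      (fun j : Fin n => m ≤ (j:ℕ) ∧ (j:ℕ) < min (m + k) d) with hR2def
  set S : ℝ := ∑ j ∈ R2, σ (j:ℕ) ^ 2 with hSdef
  have hσt : ∀ j : Fin n, j ∈ R2 → t ≤ σ (j:ℕ) ^ 2 := by
    intro j hj
    rw [hR2def, Finset.mem_filter] at hj
    rw [htdef]
    split_ifs with hc
    · have h1 : (j:ℕ) ≤ m + k - 1 := by omega
      have := hmono h1
      nlinarith [hnonneg (m + k - 1)]
    · positivity
  have step1 : ∀ j : Fin n,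
      (if (j:ℕ) < d ∧ m ≤ (j:ℕ) then σ (j:ℕ) ^ 2 else 0) * w j
        ≤ (if j ∈ R2 then σ (j:ℕ) ^ 2 - t else 0) + t * w j := by
    intro j
    by_cases hj : j ∈ R2
    · rw [if_pos hj]
      have hjm : m ≤ (j:ℕ) ∧ (j:ℕ) < min (m + k) d := by
        rw [hR2def, Finset.mem_filter] at hj; exact hj.2
      rw [if_pos ⟨by omega, hjm.1⟩]
      have h1 := hσt j hj
      nlinarith [hw0 j, hw1 j]
    · rw [if_neg hj]
      split_ifs with h1
      · have hP : ¬ (m ≤ (j:ℕ) ∧ (j:ℕ) < min (m + k) d) := fun hP =>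
          hj (Finset.mem_filter.mpr ⟨Finset.mem_univ _, hP⟩)
        have hge : m + k ≤ (j:ℕ) := by omega
        have hc : m + k ≤ min n d := by have := j.isLt; omega
        rw [htdef, if_pos hc]
        have h2 : σ (j:ℕ) ≤ σ (m + k - 1) := hmono (by omega)
        have h3 : σ (j:ℕ) ^ 2 ≤ σ (m + k - 1) ^ 2 :=
          pow_le_pow_left₀ (hnonneg _) h2 2
        rw [zero_add]
        exact mul_le_mul_of_nonneg_right h3 (hw0 j)
      · have := mul_nonneg ht0 (hw0 j)
        linarith
  have hBS : ∑ j : Fin n, (if (j:ℕ) < d ∧ m ≤ (j:ℕ) then σ (j:ℕ) ^ 2 else 0) * w j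
      ≤ S + ((k:ℝ) - R2.card) * t := by
    calc ∑ j : Fin n, (if (j:ℕ) < d ∧ m ≤ (j:ℕ) then σ (j:ℕ) ^ 2 else 0) * w j
        ≤ ∑ j : Fin n, ((if j ∈ R2 then σ (j:ℕ) ^ 2 - t else 0) + t * w j) :=
          Finset.sum_le_sum fun j _ => step1 j
      _ = (∑ j ∈ R2, (σ (j:ℕ) ^ 2 - t)) + t * ∑ j, w j := by
          rw [Finset.sum_add_distrib, Finset.sum_ite_mem, Finset.univ_inter,
            ← Finset.mul_sum]
      _ = S + ((k:ℝ) - R2.card) * t := by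
          rw [Finset.sum_sub_distrib, Finset.sum_const, hws, nsmul_eq_mul, hSdef]
          ring
  have hcorr : ((k:ℝ) - R2.card) * t = 0 := by
    by_cases hc : m + k ≤ min n d
    · have hcard : R2.card = k := by
        have hbij : R2.card = (Finset.Ico m (m + k)).card := by
          refine Finset.card_bij (fun a _ => (a:ℕ)) ?_ ?_ ?_
          · intro a ha
            rw [hR2def, Finset.mem_filter] at ha
            show (a:ℕ) ∈ Finset.Ico m (m + k)
            rw [Finset.mem_Ico]
            omega
          · intro a ha b hb hab
            exact Fin.ext hab
          · intro b hb
            rw [Finset.mem_Ico] at hb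
            refine ⟨⟨b, by omega⟩, ?_, rfl⟩
            rw [hR2def, Finset.mem_filter]
            refine ⟨Finset.mem_univ _, by simp; omega⟩
        rw [hbij, Nat.card_Ico]
        omega
      rw [hcard]; ring
    · rw [htdef, if_neg hc]; ring
  rw [hcorr, add_zero] at hBS
  refine le_trans hBS ?_
  by_cases hmN : m < min n d
  · set R1 : Finset (Fin n) := Finset.univ.filter
        (fun j : Fin n => k ≤ (j:ℕ) ∧ (j:ℕ) < m) with hR1def
    have hR1card : R1.card = m - k := by
      have hbij : R1.card = (Finset.Ico k m).card := by
        refine Finset.card_bij (fun a _ => (a:ℕ)) ?_ ?_ ?_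
        · intro a ha
          rw [hR1def, Finset.mem_filter] at ha
          show (a:ℕ) ∈ Finset.Ico k m
          rw [Finset.mem_Ico]
          omega
        · intro a ha b hb hab
          exact Fin.ext hab
        · intro b hb
          rw [Finset.mem_Ico] at hb
          refine ⟨⟨b, by omega⟩, ?_, rfl⟩
          rw [hR1def, Finset.mem_filter]
          refine ⟨Finset.mem_univ _, by simp; omega⟩
      rw [hbij, Nat.card_Ico]
    have hR2card : R2.card ≤ k := by
      have : R2.card ≤ (Finset.Ico m (m + k)).card := by
        refine Finset.card_le_card_of_injOn (fun a => (a:ℕ)) ?_ ?_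
        · intro a ha
          rw [hR2def, Finset.mem_coe, Finset.mem_filter] at ha
          show (a:ℕ) ∈ Finset.Ico m (m + k)
          rw [Finset.mem_Ico]
          omega
        · intro a _ b _ hab
          exact Fin.ext hab
      simpa using this
    have hdisj : Disjoint R1 R2 := by
      rw [hR1def, hR2def, Finset.disjoint_filter]
      rintro j - ⟨-, h2⟩ ⟨h3, -⟩
      omega
    have hTge : (∑ j ∈ R1, σ (j:ℕ) ^ 2) + S ≤ T := by
      rw [hSdef, ← Finset.sum_union hdisj, hTdef]
      have heq : ∑ j ∈ R1 ∪ R2, σ (j:ℕ) ^ 2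
          = ∑ j ∈ R1 ∪ R2, (if (j:ℕ) < d ∧ k ≤ (j:ℕ) then σ (j:ℕ) ^ 2 else 0) := by
        refine Finset.sum_congr rfl ?_
        intro j hj
        rw [Finset.mem_union, hR1def, hR2def, Finset.mem_filter, Finset.mem_filter] at hj
        rw [if_pos]
        rcases hj with ⟨-, h1, h2⟩ | ⟨-, h1, h2⟩ <;> constructor <;> omega
      rw [heq]
      exact Finset.sum_le_sum_of_subset_of_nonneg (Finset.subset_univ _)
        (fun j _ _ => by positivity)
    have hR1ge : ((m:ℝ) - k) * σ m ^ 2 ≤ ∑ j ∈ R1, σ (j:ℕ) ^ 2 := by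
      have hcardsmul := Finset.card_nsmul_le_sum R1 (fun j => σ (j:ℕ) ^ 2) (σ m ^ 2)
        (fun j hj => by
          rw [hR1def, Finset.mem_filter] at hj
          exact pow_le_pow_left₀ (hnonneg m) (hmono (le_of_lt hj.2.2)) 2)
      rw [hR1card, nsmul_eq_mul, Nat.cast_sub hkm'] at hcardsmul
      exact hcardsmul
    have hSle : S ≤ (k:ℝ) * σ m ^ 2 := by
      have := Finset.sum_le_card_nsmul R2 (fun j => σ (j:ℕ) ^ 2) (σ m ^ 2)
        (fun j hj => by
          rw [hR2def, Finset.mem_filter] at hj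
          exact pow_le_pow_left₀ (hnonneg _) (hmono hj.2.1) 2)
      rw [nsmul_eq_mul] at this
      refine le_trans this ?_
      have hx : (0:ℝ) ≤ σ m ^ 2 := by positivity
      have : (R2.card : ℝ) ≤ (k:ℝ) := by exact_mod_cast hR2card
      nlinarith
    have hx : (0:ℝ) ≤ σ m ^ 2 := by positivity
    have e1 : ε * (((m:ℝ) - k) * σ m ^ 2 + S) ≤ ε * T :=
      mul_le_mul_of_nonneg_left (by linarith) hε0.le
    have e2 : 0 ≤ (ε * m - k) * σ m ^ 2 := mul_nonneg (by linarith) hx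
    have e3 : (1 - ε) * S ≤ (1 - ε) * ((k:ℝ) * σ m ^ 2) :=
      mul_le_mul_of_nonneg_left hSle (by linarith)
    nlinarith [e1, e2, e3]
  · have hR2e : R2 = ∅ := by
      rw [hR2def, Finset.filter_eq_empty_iff]
      intro j _
      rintro ⟨h1, h2⟩
      have := j.isLt
      omega
    rw [hSdef, hR2e, Finset.sum_empty]
    positivity

/-- Let `A = U Σ Vᵀ` be a singular value decomposition of `A ∈ ℝ^{n×d}` (singular
values `σ` given 0-indexed, nonincreasing, nonnegative), let `m = ⌈k/ε⌉` with
`0 < ε < 1`, let `A_m`, `A_k` be the best rank-`m` and rank-`k` approximations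
(truncated SVDs), and set `C = AAᵀ`, `C̃ = A_m A_mᵀ`. Then `E := C̃ − C` is
symmetric, negative semidefinite, and the sum of its `k` largest absolute
eigenvalues is at most `ε · ‖A − A_k‖_F²`. -/
theorem svd_sketch_error {n d : ℕ} (k : ℕ) (ε : ℝ) (hε0 : 0 < ε) (hε1 : ε < 1)
    (A Am Ak : Matrix (Fin n) (Fin d) ℝ)
    (U : Matrix (Fin n) (Fin n) ℝ) (V : Matrix (Fin d) (Fin d) ℝ) (σ : ℕ → ℝ)
    (hU : Uᵀ * U = 1) (hV : Vᵀ * V = 1)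
    (hA : A = U * Matrix.of (fun (i : Fin n) (j : Fin d) =>
      if (i : ℕ) = (j : ℕ) then σ (i : ℕ) else 0) * V)
    (hmono : Antitone σ) (hnonneg : ∀ i, 0 ≤ σ i)
    (hAm : Am = U * Matrix.of (fun (i : Fin n) (j : Fin d) =>
      if (i : ℕ) = (j : ℕ) ∧ (i : ℕ) < ⌈(k : ℝ) / ε⌉₊ then σ (i : ℕ) else 0) * V)
    (hAk : Ak = U * Matrix.of (fun (i : Fin n) (j : Fin d) =>
      if (i : ℕ) = (j : ℕ) ∧ (i : ℕ) < k then σ (i : ℕ) else 0) * V)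
    (E : Matrix (Fin n) (Fin n) ℝ) (hE : E = Am * Amᵀ - A * Aᵀ) :
    Eᵀ = E ∧ (-E).PosSemidef ∧
      ∀ hEh : E.IsHermitian, sumTopAbsEigen hEh k ≤ ε * frobSq (A - Ak) := by
  have hUU : U * Uᵀ = 1 := mul_eq_one_comm.mp hU
  have hVV : V * Vᵀ = 1 := mul_eq_one_comm.mp hV
  set m := ⌈(k:ℝ)/ε⌉₊ with hmdef
  have hkm : (k:ℝ) ≤ ε * m := by
    have h1 : (k:ℝ)/ε ≤ m := Nat.le_ceil _
    calc (k:ℝ) = ε * ((k:ℝ)/ε) := by field_simp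
      _ ≤ ε * m := mul_le_mul_of_nonneg_left h1 hε0.le
  have hkm' : k ≤ m := by
    have : (k:ℝ) ≤ (m:ℝ) := le_trans hkm (by nlinarith [Nat.cast_nonneg (α := ℝ) m])
    exact_mod_cast this
  clear_value m
  clear hmdef
  have hA2 : A = U * sMat n d σ (fun _ => true) * V := by
    rw [hA]; congr 1; congr 1
    ext i j
    simp [sMat]
  have hAm2 : Am = U * sMat n d σ (fun i => decide (i < m)) * V := by
    rw [hAm]; congr 1; congr 1
    ext i j
    simp [sMat]
  have hAk2 : Ak = U * sMat n d σ (fun i => decide (i < k)) * V := by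
    rw [hAk]; congr 1; congr 1
    ext i j
    simp [sMat]
  have hdiff : A - Ak = U * sMat n d σ (fun i => decide (k ≤ i)) * V := by
    rw [hA2, hAk2, ← Matrix.sub_mul, ← Matrix.mul_sub]
    congr 1; congr 1
    ext i j
    simp only [sMat, Matrix.sub_apply, Matrix.of_apply]
    split_ifs <;> simp_all <;> omega
  set g : Fin n → ℝ := fun i => if (i:ℕ) < d ∧ m ≤ (i:ℕ) then σ (i:ℕ) ^ 2 else 0 with hgdef
  have hEneg : -E = U * Matrix.diagonal g * Uᵀ := by
    rw [hE, neg_sub, hA2, hAm2, prodUV U V σ hVV, prodUV U V σ hVV,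
      ← Matrix.sub_mul, ← Matrix.mul_sub, Matrix.diagonal_sub]
    refine congrArg (fun D => U * D * Uᵀ) ?_
    refine congrArg Matrix.diagonal ?_
    funext i
    simp only [hgdef, decide_eq_true_eq, and_self, true_and, and_true]
    split_ifs with h1 h2 h3 h4 h5
    all_goals first | ring1 | (exfalso; omega)
  have hEeq : E = -(U * Matrix.diagonal g * Uᵀ) := by rw [← hEneg, neg_neg]
  have hg0 : ∀ i, 0 ≤ g i := by
    intro i
    rw [hgdef]
    dsimp only
    split_ifs <;> positivity
  have hsym : Eᵀ = E := by
    rw [hEeq]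
    simp [Matrix.transpose_neg, Matrix.transpose_mul, Matrix.transpose_transpose,
      Matrix.diagonal_transpose, Matrix.mul_assoc]
  have hpsd : (-E).PosSemidef := by
    rw [hEneg]
    have := (Matrix.posSemidef_diagonal_iff.mpr hg0).mul_mul_conjTranspose_same U
    simpa [Matrix.conjTranspose_eq_transpose_of_trivial] using this
  set h : Fin n → ℝ := fun i => if (i:ℕ) < d ∧ k ≤ (i:ℕ) then σ (i:ℕ) ^ 2 else 0 with hhdef
  have hfrob : frobSq (A - Ak) = ∑ i : Fin n, h i := by
    rw [frobSq, hdiff, prodUV U V σ hVV, Matrix.trace_mul_comm, ← Matrix.mul_assoc,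
      hU, Matrix.one_mul, Matrix.trace_diagonal]
    refine Finset.sum_congr rfl fun i _ => ?_
    rw [hhdef]
    simp
  have hT0 : (0:ℝ) ≤ ∑ i : Fin n, h i :=
    Finset.sum_nonneg fun i _ => by rw [hhdef]; dsimp only; split_ifs <;> positivity
  refine ⟨hsym, hpsd, ?_⟩
  intro hEh
  rw [sumTopAbsEigen, hfrob]
  apply Real.sSup_le
  swap
  · exact mul_nonneg hε0.le hT0
  rintro x ⟨s, hs, rfl⟩
  -- eigen decomposition
  set Q : Matrix (Fin n) (Fin n) ℝ :=
    (Matrix.IsHermitian.eigenvectorUnitary hEh : Matrix (Fin n) (Fin n) ℝ) with hQdef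
  have hQ1 : Qᵀ * Q = 1 := by
    have := Unitary.coe_star_mul_self (Matrix.IsHermitian.eigenvectorUnitary hEh)
    rw [hQdef]
    simpa [Matrix.star_eq_conjTranspose,
      Matrix.conjTranspose_eq_transpose_of_trivial] using this
  have hQ2 : Q * Qᵀ = 1 := mul_eq_one_comm.mp hQ1
  set P : Matrix (Fin n) (Fin n) ℝ := Uᵀ * Q with hPdef
  have hPt : Pᵀ = Qᵀ * U := by
    rw [hPdef, Matrix.transpose_mul, Matrix.transpose_transpose]
  have hPtP : Pᵀ * P = 1 := by
    rw [hPt, hPdef, Matrix.mul_assoc, ← Matrix.mul_assoc U Uᵀ Q, hUU,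
      Matrix.one_mul, hQ1]
  have hPPt : P * Pᵀ = 1 := mul_eq_one_comm.mp hPtP
  have hspec : star Q * E * Q = Matrix.diagonal (RCLike.ofReal ∘ hEh.eigenvalues) := by
    have := hEh.conjStarAlgAut_star_eigenvectorUnitary
    rw [Unitary.conjStarAlgAut_star_apply] at this
    exact this
  have hval : ∀ i : Fin n, hEh.eigenvalues i = -∑ j : Fin n, g j * (P j i) ^ 2 := by
    intro i
    have h1 : (star Q * E * Q) i i = hEh.eigenvalues i := by
      rw [hspec]
      simp [Matrix.diagonal_apply_eq, Function.comp]
    rw [← h1]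
    rw [Matrix.star_eq_conjTranspose, Matrix.conjTranspose_eq_transpose_of_trivial]
    rw [hEeq]
    have h2 : Qᵀ * -(U * Matrix.diagonal g * Uᵀ) * Q
        = -(Pᵀ * (Matrix.diagonal g * P)) := by
      rw [hPt, hPdef]
      simp only [Matrix.neg_mul, Matrix.mul_neg, Matrix.mul_assoc]
    rw [h2, Matrix.neg_apply, neg_inj, Matrix.mul_apply]
    refine Finset.sum_congr rfl fun j _ => ?_
    rw [Matrix.transpose_apply, Matrix.diagonal_mul]
    ring
  -- rewrite the sum of |eigenvalues|
  set w : Fin n → ℝ := fun j => ∑ i ∈ s, (P j i) ^ 2 with hwdef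
  have hsum : ∑ i ∈ s, |hEh.eigenvalues i| = ∑ j : Fin n, g j * w j := by
    have habs : ∀ i : Fin n, |hEh.eigenvalues i| = ∑ j : Fin n, g j * (P j i) ^ 2 := by
      intro i
      rw [hval i, abs_neg, abs_of_nonneg]
      exact Finset.sum_nonneg fun j _ => mul_nonneg (hg0 j) (sq_nonneg _)
    calc ∑ i ∈ s, |hEh.eigenvalues i| = ∑ i ∈ s, ∑ j : Fin n, g j * (P j i) ^ 2 :=
          Finset.sum_congr rfl fun i _ => habs i
      _ = ∑ j : Fin n, ∑ i ∈ s, g j * (P j i) ^ 2 := Finset.sum_comm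
      _ = ∑ j : Fin n, g j * w j := by
          refine Finset.sum_congr rfl fun j _ => ?_
          rw [hwdef, Finset.mul_sum]
  have hw0 : ∀ j, 0 ≤ w j := fun j => Finset.sum_nonneg fun i _ => sq_nonneg _
  have hw1 : ∀ j, w j ≤ 1 := by
    intro j
    have hrow : ∑ i : Fin n, (P j i) ^ 2 = 1 := by
      have := congrFun (congrFun hPPt j) j
      simp only [Matrix.mul_apply, Matrix.transpose_apply, Matrix.one_apply_eq] at this
      rw [← this]
      exact Finset.sum_congr rfl fun i _ => (sq (P j i)).symm ▸ by ring
    rw [hwdef, ← hrow]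
    exact Finset.sum_le_sum_of_subset_of_nonneg (Finset.subset_univ s)
      (fun i _ _ => sq_nonneg _)
  have hws : ∑ j : Fin n, w j = (k:ℝ) := by
    rw [hwdef]
    rw [Finset.sum_comm]
    have hcol : ∀ i : Fin n, ∑ j : Fin n, (P j i) ^ 2 = 1 := by
      intro i
      have := congrFun (congrFun hPtP i) i
      simp only [Matrix.mul_apply, Matrix.transpose_apply, Matrix.one_apply_eq] at this
      rw [← this]
      exact Finset.sum_congr rfl fun j _ => by ring
    rw [Finset.sum_congr rfl fun i _ => hcol i, Finset.sum_const, hs, nsmul_eq_mul,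
      mul_one]
  rw [hsum]
  have := scalar_bound d k m ε hε0 hε1 σ hmono hnonneg hkm hkm' w hw0 hw1 hws
  calc ∑ j : Fin n, g j * w j
      = ∑ j : Fin n, (if (j:ℕ) < d ∧ m ≤ (j:ℕ) then σ (j:ℕ) ^ 2 else 0) * w j := rfl
    _ ≤ ε * ∑ j : Fin n, (if (j:ℕ) < d ∧ k ≤ (j:ℕ) then σ (j:ℕ) ^ 2 else 0) := this
    _ = ε * ∑ i : Fin n, h i := rfl
end

section
/- Let A ∈ ℝ^{n×d}, 0 ≤ ε < 1, m = ⌈k/ε⌉, and let P be any rank-k orthogonal projection in ℝ^{n×n}. Then with c = ‖A − A_m‖_F², it holds that ‖A − PA‖_F² ≤ ‖A_m − P A_m‖_F² + c ≤ (1+ε)‖A − PA‖_F². -/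
open Matrix Finset

lemma trace_of_idem {n k : ℕ} (P : Matrix (Fin n) (Fin n) ℝ)
    (hPidem : P * P = P) (hPrank : P.rank = k) : Matrix.trace P = (k : ℝ) := by
  have hf : P.mulVecLin ∘ₗ P.mulVecLin = P.mulVecLin := by
    rw [← Matrix.mulVecLin_mul, hPidem]
  obtain ⟨p, hp⟩ := (LinearMap.isProj_iff_isIdempotentElem P.mulVecLin).mpr hf
  have hrange : LinearMap.range P.mulVecLin = p := by
    apply le_antisymm
    · rintro x ⟨y, rfl⟩; exact hp.map_mem y
    · intro x hx; exact ⟨x, hp.map_id x hx⟩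
  have htr := hp.trace
  have h1 : LinearMap.trace ℝ (Fin n → ℝ) P.mulVecLin = Matrix.trace P := by
    rw [LinearMap.trace_eq_matrix_trace ℝ (Pi.basisFun ℝ (Fin n))]
    congr 1
    rw [LinearMap.toMatrix_eq_toMatrix', ← Matrix.toLin'_apply', LinearMap.toMatrix'_toLin']
  have h2 : P.rank = Module.finrank ℝ p := by rw [Matrix.rank, hrange]
  rw [← h1, htr, ← h2, hPrank]

lemma weight_sum (N K : ℕ) (q e : ℕ → ℝ)
    (hq0 : ∀ i < N, 0 ≤ q i) (hq1 : ∀ i < N, q i ≤ 1)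
    (hqs : ∑ i ∈ range N, q i ≤ K)
    (he : Antitone e) (he0 : ∀ i, 0 ≤ e i) :
    ∑ i ∈ range N, q i * e i ≤ ∑ j ∈ range K, e j := by
  rcases le_or_gt N K with h | h
  · calc ∑ i ∈ range N, q i * e i ≤ ∑ i ∈ range N, e i := by
          apply Finset.sum_le_sum
          intro i hi
          simp only [mem_range] at hi
          nlinarith [hq1 i hi, hq0 i hi, he0 i]
      _ ≤ ∑ j ∈ range K, e j := by
          apply Finset.sum_le_sum_of_subset_of_nonneg
          · exact Finset.range_subset_range.mpr h
          · intro i _ _; exact he0 i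
  · have hsplit : ∑ i ∈ range N, q i * e i
        = ∑ i ∈ range K, q i * e i + ∑ i ∈ Ico K N, q i * e i := by
      rw [Finset.range_eq_Ico, ← Finset.sum_Ico_consecutive _ (Nat.zero_le K) h.le, Finset.range_eq_Ico]
    have h1 : ∑ i ∈ range K, q i * e i
        ≤ ∑ i ∈ range K, e i + ∑ i ∈ range K, (q i - 1) * e K := by
      rw [← Finset.sum_add_distrib]
      apply Finset.sum_le_sum
      intro i hi
      simp only [mem_range] at hi
      have hiN : i < N := lt_trans hi h
      have : e K ≤ e i := he (le_of_lt hi)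
      nlinarith [hq1 i hiN, hq0 i hiN, he0 i]
    have h2 : ∑ i ∈ Ico K N, q i * e i ≤ ∑ i ∈ Ico K N, q i * e K := by
      apply Finset.sum_le_sum
      intro i hi
      simp only [mem_Ico] at hi
      have : e i ≤ e K := he hi.1
      nlinarith [hq0 i hi.2]
    have h3 : ∑ i ∈ range K, (q i - 1) * e K + ∑ i ∈ Ico K N, q i * e K ≤ 0 := by
      have : ∑ i ∈ range K, (q i - 1) * e K + ∑ i ∈ Ico K N, q i * e K
          = (∑ i ∈ range N, q i - K) * e K := by
        rw [← Finset.sum_mul, ← Finset.sum_mul]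
        have : ∑ i ∈ range N, q i = ∑ i ∈ range K, q i + ∑ i ∈ Ico K N, q i := by
          rw [Finset.range_eq_Ico, ← Finset.sum_Ico_consecutive _ (Nat.zero_le K) h.le, Finset.range_eq_Ico]
        rw [this, Finset.sum_sub_distrib]
        simp
        ring
      rw [this]
      apply mul_nonpos_of_nonpos_of_nonneg
      · linarith
      · exact he0 K
    linarith

lemma diag_mul {n d : ℕ} (σ : ℕ → ℝ) (c : ℕ → Prop) [DecidablePred c] :
    (Matrix.of fun (i : Fin n) (j : Fin d) => if (i : ℕ) = (j : ℕ) ∧ c i then σ i else 0) *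
      (Matrix.of fun (i : Fin n) (j : Fin d) => if (i : ℕ) = (j : ℕ) ∧ c i then σ i else 0)ᵀ
      = Matrix.diagonal (fun i : Fin n => if (i : ℕ) < d ∧ c i then σ i ^ 2 else 0) := by
  ext i i'
  rw [Matrix.mul_apply]
  simp only [Matrix.transpose_apply, Matrix.of_apply, Matrix.diagonal_apply]
  by_cases hii : i = i'
  · subst hii
    simp only [if_pos rfl]
    by_cases h : (i : ℕ) < d ∧ c (i : ℕ)
    · rw [if_pos h]
      rw [Finset.sum_eq_single (⟨(i : ℕ), h.1⟩ : Fin d)]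
      · simp [h.2]; ring
      · intro j _ hj
        have : (i : ℕ) ≠ (j : ℕ) := by
          intro he; apply hj; exact Fin.ext he.symm
        simp [this]
      · simp
    · rw [if_neg h]
      apply Finset.sum_eq_zero
      intro j _
      by_cases hc : c (i : ℕ)
      · have : (i : ℕ) ≠ (j : ℕ) := by
          intro he
          exact h ⟨he ▸ j.isLt, hc⟩
        simp [this]
      · simp [hc]
  · rw [if_neg hii]
    apply Finset.sum_eq_zero
    intro j _
    have : ¬((i : ℕ) = (j : ℕ) ∧ c i) ∨ ¬((i' : ℕ) = (j : ℕ) ∧ c i') := by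
      by_contra hcon
      push_neg at hcon
      obtain ⟨⟨h1, _⟩, h2, _⟩ := hcon
      exact hii (Fin.ext (h1.trans h2.symm))
    rcases this with h | h
    · rw [if_neg h, zero_mul]
    · rw [if_neg h, mul_zero]

lemma trace_mul_diag {n : ℕ} (M : Matrix (Fin n) (Fin n) ℝ) (f : Fin n → ℝ) :
    Matrix.trace (M * Matrix.diagonal f) = ∑ i, M i i * f i := by
  simp [Matrix.trace, Matrix.diag, Matrix.mul_diagonal]

lemma frob_conj {n d : ℕ} (U : Matrix (Fin n) (Fin n) ℝ) (V : Matrix (Fin d) (Fin d) ℝ)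
    (hV' : V * Vᵀ = 1) (W : Matrix (Fin n) (Fin n) ℝ) (S : Matrix (Fin n) (Fin d) ℝ) :
    frobSq (W * (U * S * V)) = Matrix.trace (Uᵀ * Wᵀ * W * U * (S * Sᵀ)) := by
  unfold frobSq
  rw [show W * (U * S * V) * (W * (U * S * V))ᵀ
      = W * U * (S * (V * Vᵀ) * Sᵀ) * (Uᵀ * Wᵀ) by
    simp only [Matrix.transpose_mul, Matrix.mul_assoc]]
  rw [hV', Matrix.mul_one]
  rw [Matrix.trace_mul_comm]
  simp only [Matrix.mul_assoc]

set_option maxHeartbeats 1000000 in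
/-- SVD sketches are projection-cost preserving with one-sided error: if
`A = U Σ Vᵀ` is a singular value decomposition of `A ∈ ℝ^{n×d}` (singular values
`σ` 0-indexed, nonincreasing, nonnegative), `m = ⌈k/ε⌉` with `0 < ε < 1`, `A_m` is
the best rank-`m` approximation (truncated SVD), and `c = ‖A − A_m‖_F²`, then for
every rank-`k` orthogonal projection `P`,
`‖A − PA‖_F² ≤ ‖A_m − P A_m‖_F² + c ≤ (1+ε)‖A − PA‖_F²`. -/
theorem svd_projection_cost_preserving {n d : ℕ} (k : ℕ) (ε : ℝ)
    (hε0 : 0 < ε) (hε1 : ε < 1)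
    (A Am : Matrix (Fin n) (Fin d) ℝ)
    (U : Matrix (Fin n) (Fin n) ℝ) (V : Matrix (Fin d) (Fin d) ℝ) (σ : ℕ → ℝ)
    (hU : Uᵀ * U = 1) (hV : Vᵀ * V = 1)
    (hA : A = U * Matrix.of (fun (i : Fin n) (j : Fin d) =>
      if (i : ℕ) = (j : ℕ) then σ (i : ℕ) else 0) * V)
    (hmono : Antitone σ) (hnonneg : ∀ i, 0 ≤ σ i)
    (hAm : Am = U * Matrix.of (fun (i : Fin n) (j : Fin d) =>
      if (i : ℕ) = (j : ℕ) ∧ (i : ℕ) < ⌈(k : ℝ) / ε⌉₊ then σ (i : ℕ) else 0) * V)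
    (P : Matrix (Fin n) (Fin n) ℝ)
    (hPsymm : Pᵀ = P) (hPidem : P * P = P) (hPrank : P.rank = k) :
    frobSq (A - P * A) ≤ frobSq (Am - P * Am) + frobSq (A - Am) ∧
      frobSq (Am - P * Am) + frobSq (A - Am) ≤ (1 + ε) * frobSq (A - P * A) := by
  set m : ℕ := ⌈(k : ℝ) / ε⌉₊ with hm
  have hU' : U * Uᵀ = 1 := mul_eq_one_comm.mp hU
  have hV' : V * Vᵀ = 1 := mul_eq_one_comm.mp hV
  set Q : Matrix (Fin n) (Fin n) ℝ := Uᵀ * P * U with hQ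
  -- basic facts about Q
  have hQsymm : Qᵀ = Q := by
    rw [hQ]
    simp [Matrix.transpose_mul, hPsymm, Matrix.mul_assoc]
  have hQidem : Q * Q = Q := by
    rw [hQ]
    calc Uᵀ * P * U * (Uᵀ * P * U) = Uᵀ * (P * (U * Uᵀ) * P) * U := by
          simp only [Matrix.mul_assoc]
      _ = Uᵀ * (P * P) * U := by rw [hU', Matrix.mul_one]
      _ = Uᵀ * P * U := by rw [hPidem]
  have hQsq : ∀ i, Q i i = ∑ j, Q i j ^ 2 := by
    intro i
    conv_lhs => rw [← hQidem]
    rw [Matrix.mul_apply]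
    congr 1; ext j
    have : Q j i = Q i j :=
      (Matrix.transpose_apply Q i j).symm.trans (congrFun (congrFun hQsymm i) j)
    rw [this]; ring
  have hQ0 : ∀ i, 0 ≤ Q i i := by
    intro i; rw [hQsq i]; positivity
  have hQ1 : ∀ i, Q i i ≤ 1 := by
    intro i
    have h1 : Q i i ^ 2 ≤ Q i i := by
      conv_rhs => rw [hQsq i]
      exact Finset.single_le_sum (f := fun j => Q i j ^ 2)
        (fun j _ => sq_nonneg _) (Finset.mem_univ i)
    nlinarith [hQ0 i]
  have htrQ : ∑ i, Q i i = (k : ℝ) := by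
    have : Matrix.trace Q = Matrix.trace P := by
      rw [hQ, Matrix.trace_mul_cycle, hU', Matrix.one_mul]
    rw [show (∑ i, Q i i) = Matrix.trace Q from rfl, this, trace_of_idem P hPidem hPrank]
  have hkn : k ≤ n := by
    rw [← hPrank]
    simpa using P.rank_le_card_width
  -- Sigma matrices
  set S0 : Matrix (Fin n) (Fin d) ℝ := Matrix.of (fun (i : Fin n) (j : Fin d) =>
    if (i : ℕ) = (j : ℕ) ∧ True then σ (i : ℕ) else 0) with hS0def
  set S1 : Matrix (Fin n) (Fin d) ℝ := Matrix.of (fun (i : Fin n) (j : Fin d) =>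
    if (i : ℕ) = (j : ℕ) ∧ (i : ℕ) < m then σ (i : ℕ) else 0) with hS1def
  set S2 : Matrix (Fin n) (Fin d) ℝ := Matrix.of (fun (i : Fin n) (j : Fin d) =>
    if (i : ℕ) = (j : ℕ) ∧ ¬(i : ℕ) < m then σ (i : ℕ) else 0) with hS2def
  have hA' : A = U * S0 * V := by
    rw [hA, hS0def]
    congr 2
    ext i j
    simp
  have hAm' : Am = U * S1 * V := hAm
  have hS2 : S0 - S1 = S2 := by
    rw [hS0def, hS1def, hS2def]
    ext i j
    simp only [Matrix.sub_apply, Matrix.of_apply, and_true]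
    by_cases h1 : (i : ℕ) = (j : ℕ)
    · by_cases h2 : (i : ℕ) < m
      · rw [if_pos h1, if_pos ⟨h1, h2⟩, if_neg (fun h => h.2 h2), sub_self]
      · rw [if_pos h1, if_neg (fun h => h2 h.2), if_pos ⟨h1, h2⟩, sub_zero]
    · rw [if_neg h1, if_neg (fun h => h1 h.1), if_neg (fun h => h1 h.1), sub_zero]
  have hD0 := diag_mul (n := n) (d := d) σ (fun _ => True)
  have hD1 := diag_mul (n := n) (d := d) σ (fun i => i < m)
  have hD2 := diag_mul (n := n) (d := d) σ (fun i => ¬ i < m)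
  -- frobSq computations
  have h1p : (1 - P) * (1 - P) = 1 - P := by
    simp only [Matrix.mul_sub, Matrix.sub_mul, Matrix.mul_one, Matrix.one_mul, hPidem]
    abel
  have hW : Uᵀ * (1 - P)ᵀ * (1 - P) * U = 1 - Q := by
    calc Uᵀ * (1 - P)ᵀ * (1 - P) * U = Uᵀ * ((1 - P) * (1 - P)) * U := by
          rw [Matrix.transpose_sub, Matrix.transpose_one, hPsymm]
          simp only [Matrix.mul_assoc]
      _ = Uᵀ * (1 - P) * U := by rw [h1p]
      _ = 1 - Q := by rw [Matrix.mul_sub, Matrix.mul_one, Matrix.sub_mul, hU, hQ]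
  have hc1 : frobSq (A - P * A) = ∑ i : Fin n,
      (1 - Q i i) * (if (i : ℕ) < d ∧ True then σ (i : ℕ) ^ 2 else 0) := by
    have e1 : A - P * A = (1 - P) * (U * S0 * V) := by
      rw [hA', Matrix.sub_mul, Matrix.one_mul]
    rw [e1, frob_conj U V hV' (1 - P) S0, hS0def, hD0, hW, trace_mul_diag]
    apply Finset.sum_congr rfl
    intro i _
    congr 1
    simp [Matrix.sub_apply, Matrix.one_apply_eq]
  have hc2 : frobSq (Am - P * Am) = ∑ i : Fin n,
      (1 - Q i i) * (if (i : ℕ) < d ∧ (i : ℕ) < m then σ (i : ℕ) ^ 2 else 0) := by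
    have e2 : Am - P * Am = (1 - P) * (U * S1 * V) := by
      rw [hAm', Matrix.sub_mul, Matrix.one_mul]
    rw [e2, frob_conj U V hV' (1 - P) S1, hS1def, hD1, hW, trace_mul_diag]
    apply Finset.sum_congr rfl
    intro i _
    congr 1
    simp [Matrix.sub_apply, Matrix.one_apply_eq]
  have hc3 : frobSq (A - Am) = ∑ i : Fin n,
      (if (i : ℕ) < d ∧ ¬(i : ℕ) < m then σ (i : ℕ) ^ 2 else 0) := by
    have e3 : A - Am = (1 : Matrix (Fin n) (Fin n) ℝ) * (U * S2 * V) := by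
      rw [hA', hAm', Matrix.one_mul, ← Matrix.sub_mul, ← Matrix.mul_sub, hS2]
    have hI : Uᵀ * (1 : Matrix (Fin n) (Fin n) ℝ)ᵀ * 1 * U = 1 := by
      rw [Matrix.transpose_one, Matrix.mul_one, Matrix.mul_one, hU]
    rw [e3, frob_conj U V hV' 1 S2, hS2def, hD2, hI, Matrix.one_mul, Matrix.trace_diagonal]
  have key : frobSq (A - P * A) + ∑ i : Fin n,
        Q i i * (if (i : ℕ) < d ∧ ¬(i : ℕ) < m then σ (i : ℕ) ^ 2 else 0)
      = frobSq (Am - P * Am) + frobSq (A - Am) := by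
    rw [hc1, hc2, hc3, ← Finset.sum_add_distrib, ← Finset.sum_add_distrib]
    apply Finset.sum_congr rfl
    intro i _
    by_cases h1 : (i : ℕ) < d <;> by_cases h2 : (i : ℕ) < m <;> simp [h1, h2] <;> ring
  -- scalar sequences
  set ed : ℕ → ℝ := fun i => if i < d then σ i ^ 2 else 0 with hed
  have hed0 : ∀ i, 0 ≤ ed i := by
    intro i
    rw [hed]
    dsimp only
    split
    · exact sq_nonneg _
    · exact le_refl 0
  have hed_anti : Antitone ed := by
    intro i j hij
    rw [hed]
    dsimp only
    by_cases hj : j < d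
    · rw [if_pos hj, if_pos (lt_of_le_of_lt hij hj)]
      have h1 := hmono hij
      have h2 := hnonneg j
      nlinarith
    · rw [if_neg hj]
      split
      · exact sq_nonneg _
      · exact le_refl 0
  set qf : ℕ → ℝ := fun i => if h : i < n then Q ⟨i, h⟩ ⟨i, h⟩ else 0 with hqf
  have hqf0 : ∀ i, 0 ≤ qf i := by
    intro i
    rw [hqf]
    dsimp only
    split
    · exact hQ0 _
    · exact le_refl 0
  have hqf1 : ∀ i, qf i ≤ 1 := by
    intro i
    rw [hqf]
    dsimp only
    split
    · exact hQ1 _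
    · exact zero_le_one
  have hqfi : ∀ i : Fin n, qf (i : ℕ) = Q i i := by
    intro i
    rw [hqf]
    simp [i.isLt]
  have hqsum : ∑ i ∈ range n, qf i = (k : ℝ) := by
    rw [← htrQ, ← Fin.sum_univ_eq_sum_range]
    exact Finset.sum_congr rfl fun i _ => hqfi i
  -- lower bound on the cost
  have hc1' : frobSq (A - P * A) = ∑ i ∈ range n, (1 - qf i) * ed i := by
    rw [hc1, ← Fin.sum_univ_eq_sum_range (fun i => (1 - qf i) * ed i)]
    apply Finset.sum_congr rfl
    intro i _
    rw [hqfi i, hed]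
    simp
  have hT : ∑ i ∈ Ico k n, ed i ≤ frobSq (A - P * A) := by
    rw [hc1']
    have hsplit : ∑ i ∈ range n, (1 - qf i) * ed i
        = ∑ i ∈ range n, ed i - ∑ i ∈ range n, qf i * ed i := by
      rw [← Finset.sum_sub_distrib]
      apply Finset.sum_congr rfl
      intro i _
      ring
    have hws : ∑ i ∈ range n, qf i * ed i ≤ ∑ j ∈ range k, ed j :=
      weight_sum n k qf ed (fun i _ => hqf0 i) (fun i _ => hqf1 i) (le_of_eq hqsum)
        hed_anti hed0
    have hIco : ∑ i ∈ range n, ed i - ∑ j ∈ range k, ed j = ∑ i ∈ Ico k n, ed i := by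
      rw [Finset.range_eq_Ico, ← Finset.sum_Ico_consecutive _ (Nat.zero_le k) hkn, Finset.range_eq_Ico]
      ring
    linarith
  have hTnn : 0 ≤ ∑ i ∈ Ico k n, ed i := Finset.sum_nonneg fun i _ => hed0 i
  -- the cross term
  set X : ℝ := ∑ i : Fin n, Q i i * (if (i : ℕ) < d ∧ ¬(i : ℕ) < m then σ (i : ℕ) ^ 2 else 0)
    with hX
  have hX0 : 0 ≤ X := by
    rw [hX]
    apply Finset.sum_nonneg
    intro i _
    apply mul_nonneg (hQ0 i)
    split
    · exact sq_nonneg _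
    · exact le_refl 0
  have hXsum : X = ∑ i ∈ range n, qf i * (if i < m then 0 else ed i) := by
    rw [hX, ← Fin.sum_univ_eq_sum_range (fun i => qf i * (if i < m then 0 else ed i))]
    apply Finset.sum_congr rfl
    intro i _
    rw [hqfi i, hed]
    by_cases h1 : (i : ℕ) < d <;> by_cases h2 : (i : ℕ) < m <;> simp [h1, h2]
  have hXε : X ≤ ε * frobSq (A - P * A) := by
    have hεT : X ≤ ε * ∑ i ∈ Ico k n, ed i := by
      rcases le_or_gt n m with hnm | hmn
      · have : X = 0 := by
          rw [hXsum]
          apply Finset.sum_eq_zero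
          intro i hi
          simp only [mem_range] at hi
          rw [if_pos (lt_of_lt_of_le hi hnm), mul_zero]
        rw [this]
        positivity
      · -- m < n
        have hkεm : (k : ℝ) ≤ ε * m := by
          have h1 : (k : ℝ) / ε ≤ (m : ℝ) := by
            rw [hm]; exact Nat.le_ceil _
          rw [div_le_iff₀ hε0] at h1
          linarith
        have hkmR : (k : ℝ) ≤ (m : ℝ) := by nlinarith [Nat.cast_nonneg (α := ℝ) m]
        have hkm : k ≤ m := Nat.cast_le.mp hkmR
        set K' : ℕ := min k (n - m) with hK'
        have hXI : X = ∑ i ∈ Ico m n, qf i * ed i := by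
          rw [hXsum, Finset.range_eq_Ico, ← Finset.sum_Ico_consecutive _ (Nat.zero_le m) hmn.le]
          have hz : ∑ i ∈ Ico 0 m, qf i * (if i < m then 0 else ed i) = 0 := by
            apply Finset.sum_eq_zero
            intro i hi
            simp only [mem_Ico] at hi
            rw [if_pos hi.2, mul_zero]
          rw [hz, zero_add]
          apply Finset.sum_congr rfl
          intro i hi
          simp only [mem_Ico] at hi
          rw [if_neg (not_lt.mpr hi.1)]
        have hXS : X ≤ ∑ j ∈ range K', ed (m + j) := by
          rw [hXI, Finset.sum_Ico_eq_sum_range]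
          apply weight_sum (n - m) K' (fun j => qf (m + j)) (fun j => ed (m + j))
            (fun i _ => hqf0 _) (fun i _ => hqf1 _) ?_ ?_ (fun i => hed0 _)
          · -- sum bound
            have hle1 : ∑ j ∈ range (n - m), qf (m + j) ≤ (k : ℝ) := by
              have : ∑ j ∈ range (n - m), qf (m + j) = ∑ i ∈ Ico m n, qf i :=
                (Finset.sum_Ico_eq_sum_range _ _ _).symm
              rw [this, ← hqsum, Finset.range_eq_Ico,
                ← Finset.sum_Ico_consecutive _ (Nat.zero_le m) hmn.le]
              have : 0 ≤ ∑ i ∈ Ico 0 m, qf i := Finset.sum_nonneg fun i _ => hqf0 i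
              linarith
            have hle2 : ∑ j ∈ range (n - m), qf (m + j) ≤ ((n - m : ℕ) : ℝ) := by
              calc ∑ j ∈ range (n - m), qf (m + j) ≤ ∑ j ∈ range (n - m), 1 :=
                    Finset.sum_le_sum fun j _ => hqf1 _
                _ = ((n - m : ℕ) : ℝ) := by simp
            rw [hK']
            push_cast [Nat.cast_min]
            exact le_min hle1 hle2
          · exact fun i j hij => hed_anti (by omega)
        have hSme : ∑ j ∈ range K', ed (m + j) ≤ (K' : ℝ) * ed m := by
          calc ∑ j ∈ range K', ed (m + j) ≤ ∑ j ∈ range K', ed m :=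
                Finset.sum_le_sum fun j _ => hed_anti (Nat.le_add_right m j)
            _ = (K' : ℝ) * ed m := by
                rw [Finset.sum_const, Finset.card_range, nsmul_eq_mul]
        have hK'k : (K' : ℝ) ≤ (k : ℝ) := by
          exact_mod_cast Nat.cast_le.mpr (min_le_left _ _)
        have hTsplit : ((m : ℝ) - k) * ed m + ∑ j ∈ range K', ed (m + j)
            ≤ ∑ i ∈ Ico k n, ed i := by
          rw [← Finset.sum_Ico_consecutive _ hkm hmn.le]
          have hp1 : ((m : ℝ) - k) * ed m ≤ ∑ i ∈ Ico k m, ed i := by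
            calc ((m : ℝ) - k) * ed m = ∑ i ∈ Ico k m, ed m := by
                  rw [Finset.sum_const, Nat.card_Ico, nsmul_eq_mul]
                  rw [Nat.cast_sub hkm]
              _ ≤ ∑ i ∈ Ico k m, ed i :=
                  Finset.sum_le_sum fun i hi =>
                    hed_anti (le_of_lt (Finset.mem_Ico.mp hi).2)
          have hp2 : ∑ j ∈ range K', ed (m + j) ≤ ∑ i ∈ Ico m n, ed i := by
            have he : ∑ j ∈ range K', ed (m + j) = ∑ i ∈ Ico m (m + K'), ed i := by
              rw [Finset.sum_Ico_eq_sum_range]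
              simp
            rw [he]
            apply Finset.sum_le_sum_of_subset_of_nonneg
            · apply Finset.Ico_subset_Ico (le_refl m)
              have : K' ≤ n - m := min_le_right _ _
              omega
            · intro i _ _
              exact hed0 i
          linarith
        have hedm : 0 ≤ ed m := hed0 m
        have hS0' : 0 ≤ ∑ j ∈ range K', ed (m + j) :=
          Finset.sum_nonneg fun j _ => hed0 _
        -- numeric conclusion
        have hnum : ∑ j ∈ range K', ed (m + j) ≤ ε * (((m : ℝ) - k) * ed m
            + ∑ j ∈ range K', ed (m + j)) := by
          have q1 : (1 - ε) * (∑ j ∈ range K', ed (m + j)) ≤ (1 - ε) * ((K' : ℝ) * ed m) :=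
            mul_le_mul_of_nonneg_left hSme (by linarith)
          have q2 : (1 - ε) * ((K' : ℝ) * ed m) ≤ (1 - ε) * ((k : ℝ) * ed m) :=
            mul_le_mul_of_nonneg_left (mul_le_mul_of_nonneg_right hK'k hedm) (by linarith)
          have q3 : (k : ℝ) * ed m ≤ ε * (m : ℝ) * ed m :=
            mul_le_mul_of_nonneg_right hkεm hedm
          nlinarith [q1, q2, q3]
        calc X ≤ ∑ j ∈ range K', ed (m + j) := hXS
          _ ≤ ε * (((m : ℝ) - k) * ed m + ∑ j ∈ range K', ed (m + j)) := hnum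
          _ ≤ ε * ∑ i ∈ Ico k n, ed i := by
              apply mul_le_mul_of_nonneg_left hTsplit (le_of_lt hε0)
    calc X ≤ ε * ∑ i ∈ Ico k n, ed i := hεT
      _ ≤ ε * frobSq (A - P * A) := mul_le_mul_of_nonneg_left hT (le_of_lt hε0)
  constructor
  · linarith [key, hX0]
  · linarith [key, hXε]
end

section
/- Suppose Ã ∈ ℝ^{n×d'} satisfies, for all rank-k orthogonal projections P ∈ ℝ^{n×n}, the inequality ‖A − PA‖_F² ≤ ‖Ã − PÃ‖_F² + c ≤ (1+ε)‖A − PA‖_F² for some fixed constant c ≥ 0 and 0 ≤ ε < 1. Let S be a set of rank-k orthogonal projections, P* minimize ‖A − PA‖_F² over S, P̃* minimize ‖Ã − PÃ‖_F² over S, and suppose P̃ ∈ S satisfies ‖Ã − P̃Ã‖_F² ≤ γ‖Ã − P̃*Ã‖_F² for some γ ≥ 1. Then ‖A − P̃A‖_F² ≤ (1+ε)·γ·‖A − P*A‖_F². -/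
open Matrix

/-- Low rank approximation via one-sided-error projection-cost preserving sketches:
if `Ã` satisfies `‖A − PA‖_F² ≤ ‖Ã − PÃ‖_F² + c ≤ (1+ε)‖A − PA‖_F²` for all
rank-`k` orthogonal projections `P`, `S` is a set of rank-`k` orthogonal
projections, `P*` minimizes the cost over `S` for `A`, `P̃*` minimizes it for `Ã`,
and `P̃ ∈ S` is a `γ`-approximate minimizer for `Ã`, then
`‖A − P̃A‖_F² ≤ (1+ε)·γ·‖A − P*A‖_F²`. -/
theorem one_sided_sketch_approx {n d d' : ℕ} (k : ℕ) (ε c γ : ℝ)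
    (hε0 : 0 ≤ ε) (hε1 : ε < 1) (hc : 0 ≤ c) (hγ : 1 ≤ γ)
    (A : Matrix (Fin n) (Fin d) ℝ) (At : Matrix (Fin n) (Fin d') ℝ)
    (hsketch : ∀ P : Matrix (Fin n) (Fin n) ℝ,
      Pᵀ = P → P * P = P → Matrix.trace P = (k : ℝ) →
      frobSq (A - P * A) ≤ frobSq (At - P * At) + c ∧
        frobSq (At - P * At) + c ≤ (1 + ε) * frobSq (A - P * A))
    (S : Set (Matrix (Fin n) (Fin n) ℝ))
    (hS : ∀ P ∈ S, Pᵀ = P ∧ P * P = P ∧ Matrix.trace P = (k : ℝ))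
    (Pstar Ptstar Pt : Matrix (Fin n) (Fin n) ℝ)
    (hPstarMem : Pstar ∈ S)
    (hPstarOpt : ∀ P ∈ S, frobSq (A - Pstar * A) ≤ frobSq (A - P * A))
    (hPtstarMem : Ptstar ∈ S)
    (hPtstarOpt : ∀ P ∈ S, frobSq (At - Ptstar * At) ≤ frobSq (At - P * At))
    (hPtMem : Pt ∈ S)
    (hPtApprox : frobSq (At - Pt * At) ≤ γ * frobSq (At - Ptstar * At)) :
    frobSq (A - Pt * A) ≤ (1 + ε) * γ * frobSq (A - Pstar * A) := by
  obtain ⟨h1, h2, h3⟩ := hS Pt hPtMem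
  obtain ⟨g1, g2, g3⟩ := hS Pstar hPstarMem
  obtain ⟨hA, _⟩ := hsketch Pt h1 h2 h3
  obtain ⟨hB, hC⟩ := hsketch Pstar g1 g2 g3
  have h4 := hPtstarOpt Pstar hPstarMem
  nlinarith [hPtApprox, hA, hB, hC, h4, mul_le_mul_of_nonneg_left h4 (le_trans zero_le_one hγ), mul_le_mul_of_nonneg_left hC (le_trans zero_le_one hγ)]
end

section
/- Let A ∈ ℝ^{n×d} with rank r ≥ k, C = AAᵀ, and suppose C̃ = C + E for a symmetric negative semidefinite matrix E whose k largest-magnitude eigenvalues satisfy Σ_{i=1}^k |λ_i(E)| ≤ ε‖A − A_k‖_F². Then for every rank-k orthogonal projection P, with Y = I − P: tr(YCY) ≤ tr(YC̃Y) − tr(E) ≤ (1+ε)·tr(YCY). -/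
open Matrix

/-- `‖A − A_k‖_F²`: the optimal squared-Frobenius-error of a rank-`k`
approximation of `A` (Eckart–Young). -/
noncomputable def optErr {n d : ℕ} (A : Matrix (Fin n) (Fin d) ℝ) (k : ℕ) : ℝ :=
  sInf {x : ℝ | ∃ B : Matrix (Fin n) (Fin d) ℝ, B.rank ≤ k ∧ x = frobSq (A - B)}

lemma aux_topk {ι : Type*} [Fintype ι] [DecidableEq ι] (μ : ι → ℝ) (k : ℕ)
    (hk : k ≤ Fintype.card ι) :
    ∃ S : Finset ι, S.card = k ∧ ∀ i ∈ S, ∀ j ∉ S, μ j ≤ μ i := by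
  induction k with
  | zero => exact ⟨∅, rfl, by simp⟩
  | succ m ih =>
    obtain ⟨S, hcard, htop⟩ := ih (Nat.le_of_succ_le hk)
    have hne : (Sᶜ : Finset ι).Nonempty := by
      rw [← Finset.card_pos, Finset.card_compl, hcard]
      omega
    obtain ⟨j0, hj0mem, hj0max⟩ := Finset.exists_max_image Sᶜ μ hne
    refine ⟨insert j0 S, ?_, ?_⟩
    · rw [Finset.card_insert_of_notMem (Finset.mem_compl.mp hj0mem), hcard]
    · intro i hi j hj
      rcases Finset.mem_insert.mp hi with rfl | hiS
      · exact hj0max j (Finset.mem_compl.mpr fun h => hj (Finset.mem_insert_of_mem h))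
      · exact htop i hiS j fun h => hj (Finset.mem_insert_of_mem h)

lemma aux_weight {ι : Type*} [Fintype ι] [DecidableEq ι] (μ q : ι → ℝ) (k : ℕ)
    (hμ : ∀ i, 0 ≤ μ i) (hq0 : ∀ i, 0 ≤ q i) (hq1 : ∀ i, q i ≤ 1)
    (hqs : ∑ i, q i ≤ (k : ℝ)) (S : Finset ι) (hcard : S.card = k)
    (htop : ∀ i ∈ S, ∀ j ∉ S, μ j ≤ μ i) :
    ∑ i, μ i * q i ≤ ∑ i ∈ S, μ i := by
  rcases S.eq_empty_or_nonempty with rfl | hne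
  · have hk0 : (k : ℝ) = 0 := by simp [← hcard]
    have hq : ∀ i ∈ (Finset.univ : Finset ι), q i = 0 := by
      rw [← Finset.sum_eq_zero_iff_of_nonneg (fun i _ => hq0 i)]
      exact le_antisymm (hqs.trans_eq hk0) (Finset.sum_nonneg fun i _ => hq0 i)
    simp only [Finset.sum_empty]
    exact le_of_eq (Finset.sum_eq_zero fun i hi => by rw [hq i hi, mul_zero])
  · obtain ⟨i0, hi0, hmin⟩ := S.exists_min_image μ hne
    set t := μ i0 with ht
    have ht0 : 0 ≤ t := hμ i0
    have key : ∀ i, μ i * q i ≤ (if i ∈ S then μ i - t else 0) + t * q i := by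
      intro i
      by_cases hi : i ∈ S
      · simp only [hi, if_pos]
        have h1 : t ≤ μ i := hmin i hi
        have h2 : q i ≤ 1 := hq1 i
        nlinarith
      · simp only [hi, if_neg, not_false_iff, zero_add]
        exact mul_le_mul_of_nonneg_right (htop i0 hi0 i hi) (hq0 i)
    calc ∑ i, μ i * q i ≤ ∑ i, ((if i ∈ S then μ i - t else 0) + t * q i) :=
          Finset.sum_le_sum fun i _ => key i
      _ = ∑ i ∈ S, (μ i - t) + t * ∑ i, q i := by
          rw [Finset.sum_add_distrib, ← Finset.mul_sum]
          congr 1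
          simp [Finset.sum_ite_mem]
      _ = ∑ i ∈ S, μ i - (k : ℝ) * t + t * ∑ i, q i := by
          rw [Finset.sum_sub_distrib, Finset.sum_const, hcard, nsmul_eq_mul]
      _ ≤ ∑ i ∈ S, μ i := by nlinarith

lemma aux_diag_nonneg {m : Type*} [Fintype m] [DecidableEq m] {M : Matrix m m ℝ}
    (h : M.PosSemidef) (i : m) : 0 ≤ M i i := by
  have := h.dotProduct_mulVec_nonneg (Pi.single i 1)
  simpa [dotProduct, mulVec, Pi.single_apply, Finset.mul_sum, mul_ite] using this

lemma aux_trace_diagonal_mul {m : Type*} [Fintype m] [DecidableEq m] (d : m → ℝ)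
    (M : Matrix m m ℝ) : Matrix.trace (diagonal d * M) = ∑ i, d i * M i i := by
  simp [Matrix.trace, Matrix.diag, Matrix.diagonal_mul]

lemma frobSq_nonneg' {n d : ℕ} (M : Matrix (Fin n) (Fin d) ℝ) :
    0 ≤ Matrix.trace (M * Mᵀ) := by
  rw [Matrix.trace]
  refine Finset.sum_nonneg fun i _ => ?_
  rw [Matrix.diag]
  rw [Matrix.mul_apply]
  exact Finset.sum_nonneg fun j _ => by
    rw [Matrix.transpose_apply]; exact mul_self_nonneg _

lemma aux_ofReal_comp {m : Type*} (f : m → ℝ) :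
    (RCLike.ofReal ∘ f : m → ℝ) = f := by
  funext i
  simp [RCLike.ofReal_real_eq_id]

lemma aux_trace_proj {m : Type*} [Fintype m] [DecidableEq m] {P : Matrix m m ℝ}
    (hh : P.IsHermitian) (hidem : P * P = P) : Matrix.trace P = (P.rank : ℝ) := by
  set d := hh.eigenvalues with hd
  set U : Matrix m m ℝ := (hh.eigenvectorUnitary : Matrix m m ℝ) with hU
  have hdiag : star U * P * U = diagonal d := by
    have := hh.conjStarAlgAut_star_eigenvectorUnitary
    rw [Unitary.conjStarAlgAut_star_apply, aux_ofReal_comp] at this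
    rw [hU]; exact this
  have hUU : U * star U = 1 := mem_unitaryGroup_iff.mp hh.eigenvectorUnitary.2
  have hUU' : star U * U = 1 := mem_unitaryGroup_iff'.mp hh.eigenvectorUnitary.2
  have hDD : diagonal d * diagonal d = diagonal d := by
    calc diagonal d * diagonal d = (star U * P * U) * (star U * P * U) := by rw [hdiag]
      _ = star U * (P * (U * star U) * P) * U := by
          simp only [Matrix.mul_assoc]
      _ = star U * (P * P) * U := by rw [hUU, Matrix.mul_one, Matrix.mul_assoc]
      _ = diagonal d := by rw [hidem, hdiag]
  have h01 : ∀ i, d i = 0 ∨ d i = 1 := by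
    intro i
    have h := hDD
    rw [diagonal_mul_diagonal] at h
    have h2 : d i * d i = d i := by
      have := congrArg (fun M : Matrix m m ℝ => M i i) h
      simpa using this
    rcases mul_eq_zero.mp (show d i * (d i - 1) = 0 by ring_nf; linarith [h2]) with h3 | h3
    · exact Or.inl h3
    · exact Or.inr (by linarith)
  have htr : Matrix.trace P = ∑ i, d i := by
    have : Matrix.trace P = Matrix.trace (star U * P * U) := by
      rw [Matrix.trace_mul_cycle, hUU, Matrix.one_mul]
    rw [this, hdiag, Matrix.trace_diagonal]
  have hrk : P.rank = Fintype.card {i // d i ≠ 0} := hh.rank_eq_card_non_zero_eigs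
  rw [htr, hrk, Fintype.card_subtype]
  rw [Finset.card_eq_sum_ones]
  push_cast
  rw [Finset.sum_filter]
  refine Finset.sum_congr rfl fun i _ => ?_
  rcases h01 i with h | h <;> simp [h]

/-- Lemma 6 of the paper: if `C = AAᵀ`, `C̃ = C + E` with `E` symmetric negative
semidefinite and the sum of the `k` largest-magnitude eigenvalues of `E` at most
`ε‖A − A_k‖_F²`, then for every rank-`k` orthogonal projection `P`, with
`Y = I − P`: `tr(YCY) ≤ tr(YC̃Y) − tr(E) ≤ (1+ε)·tr(YCY)`. -/
theorem one_sided_error_condition {n d : ℕ} (k r : ℕ) (ε : ℝ) (hε : 0 ≤ ε)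
    (A : Matrix (Fin n) (Fin d) ℝ) (hrank : A.rank = r) (hkr : k ≤ r)
    (E : Matrix (Fin n) (Fin n) ℝ) (hEh : E.IsHermitian)
    (hnsd : (-E).PosSemidef)
    (hsum : sumTopAbsEigen hEh k ≤ ε * optErr A k)
    (P : Matrix (Fin n) (Fin n) ℝ)
    (hPsymm : Pᵀ = P) (hPidem : P * P = P) (hPrank : P.rank = k) :
    Matrix.trace ((1 - P) * (A * Aᵀ) * (1 - P)) ≤
        Matrix.trace ((1 - P) * (A * Aᵀ + E) * (1 - P)) - Matrix.trace E ∧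
      Matrix.trace ((1 - P) * (A * Aᵀ + E) * (1 - P)) - Matrix.trace E ≤
        (1 + ε) * Matrix.trace ((1 - P) * (A * Aᵀ) * (1 - P)) := by
  classical
  set C := A * Aᵀ with hC
  set Y := (1 : Matrix (Fin n) (Fin n) ℝ) - P with hYdef
  have hPherm : P.IsHermitian := by
    rw [Matrix.IsHermitian, conjTranspose_eq_transpose_of_trivial, hPsymm]
  have hYidem : Y * Y = Y := by
    rw [hYdef, sub_mul, one_mul, mul_sub, mul_one, hPidem]
    abel
  have hYsymm : Yᵀ = Y := by rw [hYdef, transpose_sub, transpose_one, hPsymm]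
  have hYherm : Y.IsHermitian := by
    rw [Matrix.IsHermitian, conjTranspose_eq_transpose_of_trivial, hYsymm]
  have hPpsd : P.PosSemidef := by
    have h := Matrix.posSemidef_conjTranspose_mul_self P
    rwa [hPherm.eq, hPidem] at h
  have hYpsd : Y.PosSemidef := by
    have h := Matrix.posSemidef_conjTranspose_mul_self Y
    rwa [hYherm.eq, hYidem] at h
  -- spectral setup for E
  set lam := hEh.eigenvalues with hlam
  set U : Matrix (Fin n) (Fin n) ℝ := (hEh.eigenvectorUnitary : Matrix (Fin n) (Fin n) ℝ)
    with hU
  have hUU : U * star U = 1 := mem_unitaryGroup_iff.mp hEh.eigenvectorUnitary.2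
  have hUU' : star U * U = 1 := mem_unitaryGroup_iff'.mp hEh.eigenvectorUnitary.2
  have hspec : E = U * diagonal lam * star U := by
    conv_lhs => rw [hEh.spectral_theorem]
    rw [Unitary.conjStarAlgAut_apply, aux_ofReal_comp]
  have hlam_nonpos : ∀ i, lam i ≤ 0 := by
    intro i
    have h1 := hEh.eigenvalues_eq i
    have h2 := hnsd.dotProduct_mulVec_nonneg (⇑(hEh.eigenvectorBasis i))
    rw [neg_mulVec, dotProduct_neg] at h2
    simp only [star_trivial, RCLike.re_to_real] at h1 h2 ⊢
    rw [hlam, h1]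
    linarith
  set Q := star U * P * U with hQ
  have hQpsd : Q.PosSemidef := by
    have h := hPpsd.conjTranspose_mul_mul_same U
    rwa [← Matrix.star_eq_conjTranspose] at h
  have hq0 : ∀ i, 0 ≤ Q i i := fun i => aux_diag_nonneg hQpsd i
  have hq1 : ∀ i, Q i i ≤ 1 := by
    intro i
    have hYQ : star U * Y * U = 1 - Q := by
      rw [hYdef, Matrix.mul_sub, Matrix.mul_one, Matrix.sub_mul, hUU', hQ]
    have hpsd : (1 - Q).PosSemidef := by
      rw [← hYQ]
      have h := hYpsd.conjTranspose_mul_mul_same U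
      rwa [← Matrix.star_eq_conjTranspose] at h
    have := aux_diag_nonneg hpsd i
    simp only [Matrix.sub_apply, Matrix.one_apply_eq] at this
    linarith
  have hqsum : ∑ i, Q i i = (k : ℝ) := by
    have h1 : ∑ i, Q i i = Matrix.trace Q := by simp [Matrix.trace, Matrix.diag]
    have h2 : Matrix.trace Q = Matrix.trace P := by
      rw [hQ, Matrix.trace_mul_cycle, hUU, Matrix.one_mul]
    rw [h1, h2, aux_trace_proj hPherm hPidem, hPrank]
  have hEP : Matrix.trace (E * P) = ∑ i, lam i * Q i i := by
    have h1 : E * P = U * (diagonal lam * (star U * P)) := by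
      rw [hspec]; simp only [Matrix.mul_assoc]
    have h2 : diagonal lam * (star U * P) * U = diagonal lam * Q := by
      rw [hQ]; simp only [Matrix.mul_assoc]
    rw [h1, Matrix.trace_mul_comm U, h2, aux_trace_diagonal_mul]
  -- abs values
  set T := ∑ i, |lam i| * Q i i with hT
  have hEPT : Matrix.trace (E * P) = -T := by
    rw [hEP, hT, ← Finset.sum_neg_distrib]
    refine Finset.sum_congr rfl fun i _ => ?_
    rw [abs_of_nonpos (hlam_nonpos i)]
    ring
  have hT0 : 0 ≤ T :=
    Finset.sum_nonneg fun i _ => mul_nonneg (abs_nonneg _) (hq0 i)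
  -- top-k set
  have hkn : k ≤ n := by
    have := Matrix.rank_le_card_height A
    simp only [Fintype.card_fin] at this
    omega
  obtain ⟨S, hScard, hStop⟩ := aux_topk (fun i => |lam i|) k (by simpa using hkn)
  have hTle : T ≤ ∑ i ∈ S, |lam i| :=
    aux_weight (fun i => |lam i|) (fun i => Q i i) k (fun i => abs_nonneg _)
      hq0 hq1 (le_of_eq hqsum) S hScard hStop
  -- sSup bound
  have hbddA : BddAbove {x : ℝ | ∃ s : Finset (Fin n), s.card = k ∧
      x = ∑ i ∈ s, |hEh.eigenvalues i|} := by
    apply Set.Finite.bddAbove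
    apply Set.Finite.subset (Set.finite_range
      (fun s : Finset (Fin n) => ∑ i ∈ s, |hEh.eigenvalues i|))
    rintro x ⟨s, -, rfl⟩
    exact ⟨s, rfl⟩
  have hSsum : ∑ i ∈ S, |lam i| ≤ sumTopAbsEigen hEh k :=
    le_csSup hbddA ⟨S, hScard, rfl⟩
  -- optErr bound
  have hfrob : frobSq (A - P * A) = Matrix.trace (Y * C * Y) := by
    have h : A - P * A = Y * A := by rw [hYdef, Matrix.sub_mul, Matrix.one_mul]
    rw [h, frobSq, transpose_mul, hYsymm, hC]
    simp only [Matrix.mul_assoc]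
  have hmem : Matrix.trace (Y * C * Y) ∈ {x : ℝ | ∃ B : Matrix (Fin n) (Fin d) ℝ,
      B.rank ≤ k ∧ x = frobSq (A - B)} :=
    ⟨P * A, by rw [← hPrank]; exact Matrix.rank_mul_le_left P A, hfrob.symm⟩
  have hbddB : BddBelow {x : ℝ | ∃ B : Matrix (Fin n) (Fin d) ℝ,
      B.rank ≤ k ∧ x = frobSq (A - B)} := by
    refine ⟨0, ?_⟩
    rintro x ⟨B, -, rfl⟩
    exact frobSq_nonneg' _
  have hopt : optErr A k ≤ Matrix.trace (Y * C * Y) := csInf_le hbddB hmem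
  -- chain
  have hchain : T ≤ ε * Matrix.trace (Y * C * Y) :=
    hTle.trans (hSsum.trans (hsum.trans (mul_le_mul_of_nonneg_left hopt hε)))
  -- expand traces
  have hexpand : Matrix.trace (Y * (C + E) * Y) =
      Matrix.trace (Y * C * Y) + Matrix.trace (Y * E * Y) := by
    rw [Matrix.mul_add, Matrix.add_mul, Matrix.trace_add]
  have hYEY : Matrix.trace (Y * E * Y) = Matrix.trace E - Matrix.trace (E * P) := by
    rw [Matrix.trace_mul_cycle, hYidem, Matrix.trace_mul_comm, hYdef,
      Matrix.mul_sub, Matrix.mul_one, Matrix.trace_sub]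
  rw [hexpand, hYEY, hEPT]
  constructor <;> linarith
end
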